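/- arXiv:2001.10460 — 2 statements merged into one kernel-verified Lean document; each statement's English description precedes it below -/
import Mathlib

section
/- Consider the DenseNet fourth-moment recursion C_L = C_{L-1} · ((1 + (α-1)/L)² + 5α²/(nL²)) with C_0 = 1. Then the ratio of the fourth-moment product to the squared second-moment product satisfies C_L / (∏_{l=1}^L (1+(α-1)/l))² = ∏_{l=1}^L (1 + 5α²/(n(l+α-1)²)) ≤ exp[ (5α²/n) Σ_{l=1}^∞ 1/(l+α-1)² ], which is bounded by exp[C/n] for a constant C depending only on α, uniformly in L. -/
/-!
Since `1 + (α - 1) / l = (l + α - 1) / l`, each factor of the recursion splits as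
`(1 + (α - 1) / l) ^ 2 * (1 + 5 α ^ 2 / (n (l + α - 1) ^ 2))`, so `C_L` is the squared second-moment
product times the correction product. By `1 + x ≤ exp x` the correction product is at most the
exponential of a partial sum of the convergent series `∑ 1 / (l + α - 1) ^ 2`, hence of its full sum.
-/

open Finset

theorem prod_Icc_one_eq_of_rec {M : Type*} [CommMonoid M] {c f : ℕ → M} (h0 : c 0 = 1)
    (hrec : ∀ L, 1 ≤ L → c L = c (L - 1) * f L) (L : ℕ) : c L = ∏ l ∈ Icc 1 L, f l := by
  induction L with
  | zero => simp [h0]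
  | succ L ih =>
    rw [hrec (L + 1) L.succ_pos, Nat.add_sub_cancel, ih, prod_Icc_succ_top (by omega)]

theorem sq_one_add_div_add_div_mul_sq {α c d x : ℝ} (hx : x ≠ 0) (hxα : x + α - 1 ≠ 0) :
    (1 + (α - 1) / x) ^ 2 + c / (d * x ^ 2)
      = (1 + (α - 1) / x) ^ 2 * (1 + c / (d * (x + α - 1) ^ 2)) := by
  rw [← div_div, ← div_div]
  field_simp
  ring

theorem natCast_add_sub_one_pos {α : ℝ} (hα : 0 < α) {l : ℕ} (hl : 1 ≤ l) :
    0 < (l : ℝ) + α - 1 := by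
  have : (1 : ℝ) ≤ l := by exact_mod_cast hl
  linarith

theorem one_add_sub_one_div_natCast_pos {α : ℝ} (hα : 0 < α) {l : ℕ} (hl : 1 ≤ l) :
    0 < 1 + (α - 1) / l := by
  have hl0 : (0 : ℝ) < l := by exact_mod_cast hl
  rw [one_add_div hl0.ne', ← add_sub_assoc]
  exact div_pos (natCast_add_sub_one_pos hα hl) hl0

theorem eq_sq_prod_mul_prod_of_rec {α c d : ℝ} (hα : 0 < α) {Cs : ℕ → ℝ} (h0 : Cs 0 = 1)
    (hrec : ∀ L : ℕ, 1 ≤ L →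
      Cs L = Cs (L - 1) * ((1 + (α - 1) / L) ^ 2 + c / (d * (L : ℝ) ^ 2))) (L : ℕ) :
    Cs L = (∏ l ∈ Icc 1 L, (1 + (α - 1) / l)) ^ 2
      * ∏ l ∈ Icc 1 L, (1 + c / (d * ((l : ℝ) + α - 1) ^ 2)) := by
  rw [prod_Icc_one_eq_of_rec h0 hrec, ← prod_pow, ← prod_mul_distrib]
  refine prod_congr rfl fun l hl => sq_one_add_div_add_div_mul_sq ?_ ?_
  · exact Nat.cast_ne_zero.mpr (by grind)
  · exact (natCast_add_sub_one_pos hα (mem_Icc.mp hl).1).ne'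

theorem summable_one_div_natCast_add_sq (a : ℝ) :
    Summable fun n : ℕ => 1 / ((n : ℝ) + a) ^ 2 := by
  simpa only [Real.rpow_two, sq_abs] using
    (Real.summable_one_div_nat_add_rpow a 2).mpr one_lt_two

theorem sum_Icc_one_le_tsum_succ {f : ℝ → ℝ} (hf : ∀ l : ℕ, 0 ≤ f (l + 1))
    (hs : Summable fun l : ℕ => f (l + 1)) (L : ℕ) :
    ∑ l ∈ Icc 1 L, f l ≤ ∑' l : ℕ, f (l + 1) := by
  rw [← Ico_add_one_right_eq_Icc, sum_Ico_eq_sum_range, Nat.add_sub_cancel]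
  push_cast
  simp only [add_comm (1 : ℝ)]
  exact hs.sum_le_tsum _ fun l _ => hf l

/-- **DenseNet fourth-moment recursion and depth invariance.** Let
`C_0 = 1` and `C_L = C_{L-1} ((1 + (α-1)/L)² + 5α²/(nL²))`. Then
`C_L / (∏_{l=1}^L (1+(α-1)/l))² = ∏_{l=1}^L (1 + 5α²/(n(l+α-1)²))`, which is at most
`exp[(5α²/n) Σ_{l=1}^∞ 1/(l+α-1)²] ≤ exp[C/n]` for a constant `C` depending only
on `α`, uniformly in the depth `L`. -/
theorem densenet_fourth_moment_depth_invariance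
    (α : ℝ) (hα : 0 < α) :
    ∃ C : ℝ, 0 < C ∧ ∀ (n : ℕ), 1 ≤ n → ∀ (Cs : ℕ → ℝ), Cs 0 = 1 →
      (∀ L : ℕ, 1 ≤ L →
        Cs L = Cs (L - 1) * ((1 + (α - 1) / L) ^ 2 + 5 * α ^ 2 / (n * (L : ℝ) ^ 2))) →
      ∀ L : ℕ, 1 ≤ L →
        (Cs L / (∏ l ∈ Icc 1 L, (1 + (α - 1) / l)) ^ 2
            = ∏ l ∈ Icc 1 L, (1 + 5 * α ^ 2 / (n * ((l : ℝ) + α - 1) ^ 2))) ∧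
        (∏ l ∈ Icc 1 L, (1 + 5 * α ^ 2 / (n * ((l : ℝ) + α - 1) ^ 2))
            ≤ Real.exp ((5 * α ^ 2 / n) * ∑' l : ℕ, 1 / (((l : ℝ) + 1) + α - 1) ^ 2)) ∧
        (Real.exp ((5 * α ^ 2 / n) * ∑' l : ℕ, 1 / (((l : ℝ) + 1) + α - 1) ^ 2)
            ≤ Real.exp (C / n)) := by
  set S := ∑' l : ℕ, 1 / (((l : ℝ) + 1) + α - 1) ^ 2
  have hS : Summable fun l : ℕ => 1 / (((l : ℝ) + 1) + α - 1) ^ 2 :=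
    (summable_one_div_natCast_add_sq α).congr fun l => by ring
  have hS_pos : 0 < S := hS.tsum_pos (fun l => by positivity) 0 (by simpa using pow_pos hα 2)
  refine ⟨5 * α ^ 2 * S, by positivity, fun n _ Cs h0 hrec L _ => ⟨?_, ?_, ?_⟩⟩
  · have hprod : ∏ l ∈ Icc 1 L, (1 + (α - 1) / (l : ℝ)) ≠ 0 :=
      prod_ne_zero_iff.mpr fun l hl => (one_add_sub_one_div_natCast_pos hα (mem_Icc.mp hl).1).ne'
    rw [eq_sq_prod_mul_prod_of_rec hα h0 hrec, mul_div_cancel_left₀ _ (pow_ne_zero 2 hprod)]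
  · calc ∏ l ∈ Icc 1 L, (1 + 5 * α ^ 2 / (n * ((l : ℝ) + α - 1) ^ 2))
        ≤ Real.exp (∑ l ∈ Icc 1 L, 5 * α ^ 2 / n * (1 / ((l : ℝ) + α - 1) ^ 2)) := by
          simp only [mul_one_div, div_div]
          exact Real.prod_one_add_le_exp_sum _ fun l => by positivity
      _ ≤ Real.exp (5 * α ^ 2 / n * S) := by
          rw [← tsum_mul_left]
          gcongr
          exact sum_Icc_one_le_tsum_succ (f := fun x => 5 * α ^ 2 / n * (1 / (x + α - 1) ^ 2))
            (fun _ => by positivity) (by exact hS.mul_left _) L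
  · rw [div_mul_eq_mul_div]
end

section
/- Let x ∈ (0,1] and n ≥ 1. Then (1 + x/n)^n ≤ e^x ≤ (1 + x/n)^n · e^{x²/n}. Consequently, for the ResNet variance bound with α_l = c/L for all l and fixed c > 0, the quantity ∏_{l=1}^L (1 + ρα_l)²/(1+α_l)² with ρ = (1+5/n)^{m/2} converges to 1 as n → ∞, uniformly in L. -/
/-!
Applying `1 + t ≤ e^t ≤ (1 + t) e^{t²}` (for `t ≥ 0`) at `t = x/n` and raising to the `n`-th
power gives the two-sided estimate. For `ρ ≥ 1` and `α ≥ 0` each factor of the product satisfies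
`1 ≤ (1 + ρα)/(1 + α) ≤ 1 + (ρ - 1)α ≤ e^{(ρ - 1)α}`, so the product lies between `1` and
`exp (2 (ρ - 1) ∑ α_l)`. With `α_l = c/L` the sum is `c` whatever `L` is, and
`ρ = (1 + 5/n)^{m/2} → 1`.
-/

open Finset Filter Topology

namespace Real

/-- `(1 + t) e^{-(t - t²)} ≥ (1 + t)(1 - t + t²) = 1 + t³ ≥ 1`. -/
lemma exp_sub_sq_le_one_add {t : ℝ} (ht : 0 ≤ t) : exp (t - t ^ 2) ≤ 1 + t := by
  have hlow : 1 - t + t ^ 2 ≤ exp (-(t - t ^ 2)) := by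
    linarith [add_one_le_exp (-(t - t ^ 2))]
  have hone : 1 ≤ (1 + t) * exp (-(t - t ^ 2)) := by
    nlinarith [mul_le_mul_of_nonneg_left hlow (by linarith : (0 : ℝ) ≤ 1 + t), pow_nonneg ht 3]
  calc exp (t - t ^ 2) ≤ exp (t - t ^ 2) * ((1 + t) * exp (-(t - t ^ 2))) :=
        le_mul_of_one_le_right (exp_pos _).le hone
    _ = 1 + t := by rw [mul_left_comm, ← exp_add, add_neg_cancel, exp_zero, mul_one]

lemma one_add_div_pow_le_exp {x : ℝ} (hx : 0 ≤ x) (n : ℕ) : (1 + x / n) ^ n ≤ exp x := by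
  simpa [sub_eq_add_neg, neg_div] using
    one_sub_div_pow_le_exp_neg (n := n) (t := -x) (by linarith [n.cast_nonneg (α := ℝ)])

lemma exp_le_one_add_div_pow_mul_exp {x : ℝ} (hx : 0 ≤ x) {n : ℕ} (hn : n ≠ 0) :
    exp x ≤ (1 + x / n) ^ n * exp (x ^ 2 / n) := by
  have hn' : (n : ℝ) ≠ 0 := Nat.cast_ne_zero.mpr hn
  have hsplit : exp x = exp (x / n - (x / n) ^ 2) ^ n * exp (x ^ 2 / n) := by
    rw [← exp_nat_mul, ← exp_add]
    congr 1
    field_simp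
    ring
  rw [hsplit]
  gcongr
  exact exp_sub_sq_le_one_add (by positivity)

end Real

section ResidualScaling

open Real

variable {ρ α : ℝ}

lemma one_le_one_add_mul_div_one_add (hρ : 1 ≤ ρ) (hα : 0 ≤ α) :
    1 ≤ (1 + ρ * α) / (1 + α) := by
  rw [one_le_div (by linarith)]
  nlinarith

lemma one_add_mul_div_one_add_le_exp (hρ : 1 ≤ ρ) (hα : 0 ≤ α) :
    (1 + ρ * α) / (1 + α) ≤ exp ((ρ - 1) * α) := by
  calc (1 + ρ * α) / (1 + α) ≤ (ρ - 1) * α + 1 := by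
        rw [div_le_iff₀ (by linarith)]
        nlinarith [mul_nonneg (mul_nonneg hα hα) (sub_nonneg.mpr hρ)]
    _ ≤ exp ((ρ - 1) * α) := add_one_le_exp _

variable {ι : Type*} {s : Finset ι} {a : ι → ℝ}

lemma one_le_prod_sq_one_add_mul_div (hρ : 1 ≤ ρ) (ha : ∀ i ∈ s, 0 ≤ a i) :
    1 ≤ ∏ i ∈ s, (1 + ρ * a i) ^ 2 / (1 + a i) ^ 2 :=
  one_le_prod fun i hi => by
    rw [← div_pow]
    exact one_le_pow₀ (one_le_one_add_mul_div_one_add hρ (ha i hi))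

lemma prod_sq_one_add_mul_div_le_exp (hρ : 1 ≤ ρ) (ha : ∀ i ∈ s, 0 ≤ a i) :
    ∏ i ∈ s, (1 + ρ * a i) ^ 2 / (1 + a i) ^ 2 ≤ exp (2 * (ρ - 1) * ∑ i ∈ s, a i) := by
  rw [mul_sum, exp_sum]
  refine prod_le_prod (fun i _ => by positivity) fun i hi => ?_
  have hexp : exp (2 * (ρ - 1) * a i) = exp ((ρ - 1) * a i) ^ 2 := by
    rw [← exp_nat_mul]
    ring_nf
  rw [← div_pow, hexp]
  exact pow_le_pow_left₀ (by linarith [one_le_one_add_mul_div_one_add hρ (ha i hi)])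
    (one_add_mul_div_one_add_le_exp hρ (ha i hi)) 2

lemma abs_prod_sq_one_add_mul_div_sub_one_le (hρ : 1 ≤ ρ) (ha : ∀ i ∈ s, 0 ≤ a i) :
    |(∏ i ∈ s, (1 + ρ * a i) ^ 2 / (1 + a i) ^ 2) - 1|
      ≤ exp (2 * (ρ - 1) * ∑ i ∈ s, a i) - 1 := by
  rw [abs_of_nonneg (sub_nonneg.mpr (one_le_prod_sq_one_add_mul_div hρ ha))]
  linarith [prod_sq_one_add_mul_div_le_exp hρ ha]

end ResidualScaling

lemma sum_Icc_const_div_self (c : ℝ) {L : ℕ} (hL : L ≠ 0) : ∑ _l ∈ Icc 1 L, c / L = c := by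
  rw [sum_const, Nat.card_Icc, add_tsub_cancel_right, nsmul_eq_mul]
  field_simp

lemma tendsto_one_add_div_rpow (a p : ℝ) :
    Tendsto (fun n : ℕ => (1 + a / n) ^ p) atTop (𝓝 1) := by
  simpa using
    ((tendsto_const_div_atTop_nhds_zero_nat a).const_add 1).rpow_const (.inl (by norm_num))

/-- **Elementary exponential estimate and depth-uniform convergence.** For
`x ∈ (0,1]` and `n ≥ 1`, `(1 + x/n)^n ≤ e^x ≤ (1 + x/n)^n e^{x²/n}`. Consequently,
for the ResNet variance bound with `α_l = c/L` for all `l` and fixed `c > 0`, the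
quantity `∏_{l=1}^L (1 + ρ α_l)²/(1 + α_l)²` with `ρ = (1 + 5/n)^{m/2}` converges
to `1` as `n → ∞`, uniformly in the depth `L`. -/
theorem exp_estimate_and_uniform_convergence :
    (∀ (x : ℝ), 0 < x → x ≤ 1 → ∀ n : ℕ, 1 ≤ n →
      (1 + x / n) ^ n ≤ Real.exp x ∧
      Real.exp x ≤ (1 + x / n) ^ n * Real.exp (x ^ 2 / n)) ∧
    (∀ (c : ℝ), 0 < c → ∀ m : ℕ, 1 ≤ m → ∀ ε : ℝ, 0 < ε →
      ∃ N : ℕ, ∀ n : ℕ, N ≤ n → ∀ L : ℕ, 1 ≤ L →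
        |(∏ l ∈ Icc 1 L,
            ((1 + ((1 + 5 / (n : ℝ)) ^ ((m : ℝ) / 2)) * (c / L)) ^ 2
              / (1 + c / L) ^ 2)) - 1| ≤ ε) := by
  refine ⟨fun x hx _ n hn => ⟨Real.one_add_div_pow_le_exp hx.le n,
    Real.exp_le_one_add_div_pow_mul_exp hx.le (by omega)⟩, fun c hc m _ ε hε => ?_⟩
  have hlim : Tendsto (fun n : ℕ => Real.exp (2 * ((1 + 5 / (n : ℝ)) ^ ((m : ℝ) / 2) - 1) * c))
      atTop (𝓝 1) := by
    simpa using (((tendsto_one_add_div_rpow 5 ((m : ℝ) / 2)).sub_const 1).const_mul 2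
      |>.mul_const c).rexp
  obtain ⟨N, hN⟩ :=
    eventually_atTop.mp (hlim.eventually (eventually_le_nhds (lt_add_of_pos_right 1 hε)))
  refine ⟨N, fun n hn L hL => ?_⟩
  have hρ : 1 ≤ (1 + 5 / (n : ℝ)) ^ ((m : ℝ) / 2) :=
    Real.one_le_rpow (le_add_of_nonneg_right (by positivity)) (by positivity)
  have hbound := abs_prod_sq_one_add_mul_div_sub_one_le (s := Icc 1 L) (a := fun _ => c / L) hρ
    fun _ _ => by positivity
  rw [sum_Icc_const_div_self c (by omega)] at hbound
  linarith [hN n hn]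
end
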